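/- Let p be a prime and let X be a finite simplicial complex with an action of Z/p, with fixed point set X^{Z/p}. Then χ(X) ≡ χ(X^{Z/p}) (mod p). -/

import Mathlib

/-!
Since `g ^ p = 1` with `p` prime, the simplices off the fixed subcomplex fall into `g`-orbits
of size `p`. Dimension is constant on each orbit, hence these simplices contribute a multiple
of `p` to the alternating count `χ(X) - χ(X^{ℤ/p})`.
-/

open Finset

namespace Equiv.Perm

variable {α : Type*} [Fintype α] [DecidableEq α] {σ : Perm α} {p n : ℕ} [Fact p.Prime]

theorem dvd_card_support_of_pow_prime_pow_eq_one (hσ : σ ^ p ^ n = 1) : p ∣ #σ.support := by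
  have h := card_compl_support_modEq hσ
  rwa [Nat.modEq_iff_dvd' (card_le_univ _), ← card_compl, compl_compl] at h

theorem dvd_card_filter_support_of_pow_prime_pow_eq_one (hσ : σ ^ p ^ n = 1)
    (P : α → Prop) [DecidablePred P] (hP : ∀ x, P (σ x) ↔ P x) :
    p ∣ #{x ∈ σ.support | P x} := by
  let τ : Perm {x // P x} := σ.subtypePerm hP
  have hτ : τ ^ p ^ n = 1 := by
    ext x
    simp [τ, subtypePerm_pow, hσ]
  have h := dvd_card_support_of_pow_prime_pow_eq_one hτ
  rw [← card_map (Function.Embedding.subtype P)] at h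
  convert h using 2
  ext x
  simp [τ]

theorem dvd_sum_support_of_pow_prime_pow_eq_one {R : Type*} [Semiring R]
    (hσ : σ ^ p ^ n = 1) (f : α → R) (hf : ∀ x, f (σ x) = f x) :
    (p : R) ∣ ∑ x ∈ σ.support, f x := by
  classical
  rw [Finset.sum_comp (fun r : R => r) f]
  refine dvd_sum fun r _ => ?_
  obtain ⟨k, hk⟩ := dvd_card_filter_support_of_pow_prime_pow_eq_one hσ (fun x => f x = r)
    (fun x => by rw [hf])
  rw [hk, nsmul_eq_mul, Nat.cast_mul, mul_assoc]
  exact dvd_mul_right _ _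

end Equiv.Perm

/-- For a simplicial `ℤ/p`-action on a finite simplicial complex
(encoded by a permutation `g` of the set `S` of simplices with `g ^ p = 1`,
preserving dimension), the Euler characteristic of the complex is congruent mod `p`
to the Euler characteristic of the fixed-point subcomplex `{s | g s = s}`. -/
theorem stmt1 (p : ℕ) (hp : p.Prime) (S : Type) [Fintype S] [DecidableEq S]
    (dim : S → ℕ) (g : Equiv.Perm S)
    (hgp : g ^ p = 1)
    (hdim : ∀ s, dim (g s) = dim s) :
    (p : ℤ) ∣ (∑ s : S, (-1 : ℤ) ^ dim s) -
      ∑ s ∈ Finset.univ.filter (fun s : S => g s = s), (-1 : ℤ) ^ dim s := by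
  have : Fact p.Prime := ⟨hp⟩
  have hsupport : univ.filter (fun s => ¬g s = s) = g.support := by
    ext s
    simp
  rw [← sum_filter_add_sum_filter_not univ (fun s => g s = s), add_sub_cancel_left, hsupport]
  exact Equiv.Perm.dvd_sum_support_of_pow_prime_pow_eq_one (n := 1) (by rwa [pow_one]) _
    fun s => by rw [hdim]
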